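/- Let Q(x_0,…,x_n) ∈ ℂ[x_0,…,x_n] be a quadratic form of Waring rank n+1 and let B be an invertible (n+1)×(n+1) complex matrix such that the change of variables (x_0,…,x_n) = (y_0,…,y_n)B transforms Q into y_0^2 + ⋯ + y_n^2. Then for a nonzero vector a = (a_0,…,a_n) ∈ ℂ^{n+1}, the linear form a_0x_0 + ⋯ + a_nx_n lies in the forbidden locus F_Q if and only if a Bᵀ B aᵀ = 0; that is, F_Q = V(Q̌) ⊂ ℙ^n where Q̌(X_0,…,X_n) = (X_0 ⋯ X_n) BᵀB (X_0 ⋯ X_n)ᵀ. -/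

import Mathlib

open MvPolynomial

noncomputable section

/-- The linear form `c₀x₀ + ⋯ + cₙxₙ` with coefficient vector `c`. -/
def lin {σ : Type*} [Fintype σ] (c : σ → ℂ) : MvPolynomial σ ℂ :=
  ∑ i, C (c i) * X i

/-- `F` admits a Waring decomposition `F = L₁^d + ⋯ + L_r^d`. -/
def HasWaringDecomp {σ : Type*} [Fintype σ] (d : ℕ) (F : MvPolynomial σ ℂ) (r : ℕ) : Prop :=
  ∃ L : Fin r → σ → ℂ, F = ∑ j, lin (L j) ^ d

/-- The Waring rank of `F` (as a form of degree `d`). -/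
def waringRank {σ : Type*} [Fintype σ] (d : ℕ) (F : MvPolynomial σ ℂ) : ℕ :=
  sInf {r | HasWaringDecomp d F r}

/-- The linear form with coefficient vector `a` lies in the Waring locus of `F`:
there are linear forms `L₂, …, L_r` with `r = rk F` such that `F` lies in the
`ℂ`-linear span of `L^d, L₂^d, …, L_r^d`. -/
def InWaringLocus {σ : Type*} [Fintype σ] (d : ℕ) (F : MvPolynomial σ ℂ) (a : σ → ℂ) : Prop :=
  ∃ (c : Fin (waringRank d F) → ℂ) (L : Fin (waringRank d F) → σ → ℂ)
    (j₀ : Fin (waringRank d F)), L j₀ = a ∧ F = ∑ j, c j • lin (L j) ^ d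

/-!
The change of variables `x = y B` is invertible, so it carries Waring decompositions of `Q`
bijectively onto those of `S = y₀² + ⋯ + yₙ²`, preserving their length and sending the linear
form with coefficients `a` to the one with coefficients `B a`; since `a Bᵀ B aᵀ = (B a) ⬝ (B a)`,
it suffices to show that `b` lies in the Waring locus of `S` iff `b ⬝ b ≠ 0`.
If `S = ∑ⱼ cⱼ Lⱼ²` with `n + 1` terms and `M` has rows `Lⱼ`, then `Mᵀ diag(c) M = 1`, so
`diag(c) M Mᵀ = 1` and `cⱼ (Lⱼ ⬝ Lⱼ) = 1` for every `j`. Conversely, if `b ⬝ b = u² ≠ 0`, a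
reflection sending a basis vector to `b / u` preserves `S`, and its rows give a decomposition of
`S` of length `n + 1` containing `b / u`.
-/

open scoped Matrix

section LinearForms

variable {σ : Type*} [Fintype σ]

lemma eval_lin (c x : σ → ℂ) : eval x (lin c) = c ⬝ᵥ x := by
  simp [lin, dotProduct]

lemma lin_smul (t : ℂ) (c : σ → ℂ) : lin (t • c) = t • lin c := by
  simp only [lin, Pi.smul_apply, smul_eq_mul, C_mul, Finset.smul_sum, smul_eq_C_mul, mul_assoc]

lemma eval_sum_smul_lin_pow {ι : Type*} [Fintype ι] (d : ℕ) (c : ι → ℂ) (L : ι → σ → ℂ)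
    (x : σ → ℂ) : eval x (∑ j, c j • lin (L j) ^ d) = ∑ j, c j * (L j ⬝ᵥ x) ^ d := by
  simp [eval_lin]

lemma eval_sum_X_sq (x : σ → ℂ) : eval x (∑ i, X i ^ 2 : MvPolynomial σ ℂ) = x ⬝ᵥ x := by
  simp [dotProduct, sq]

end LinearForms

/-- The change of variables `x = y M`, i.e. `xⱼ ↦ ∑ᵢ M i j • yᵢ`. -/
def linSubst {σ : Type*} [Fintype σ] (M : Matrix σ σ ℂ) :
    MvPolynomial σ ℂ →ₐ[ℂ] MvPolynomial σ ℂ :=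
  aeval fun j => lin fun i => M i j

section LinSubst

variable {σ : Type*} [Fintype σ]

lemma linSubst_X (M : Matrix σ σ ℂ) (j : σ) : linSubst M (X j) = lin fun i => M i j :=
  aeval_X _ _

lemma linSubst_lin (M : Matrix σ σ ℂ) (c : σ → ℂ) : linSubst M (lin c) = lin (M *ᵥ c) := by
  simp only [linSubst, lin, map_sum, map_mul, aeval_C, aeval_X, algebraMap_eq, Finset.mul_sum,
    Matrix.mulVec, dotProduct, Finset.sum_mul]
  rw [Finset.sum_comm]
  exact Finset.sum_congr rfl fun _ _ => Finset.sum_congr rfl fun _ _ => by ring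

lemma linSubst_sum_smul_lin_pow {ι : Type*} [Fintype ι] (M : Matrix σ σ ℂ) (d : ℕ)
    (c : ι → ℂ) (L : ι → σ → ℂ) :
    linSubst M (∑ j, c j • lin (L j) ^ d) = ∑ j, c j • lin (M *ᵥ L j) ^ d := by
  simp only [map_sum, map_smul, map_pow, linSubst_lin]

lemma linSubst_linSubst (M N : Matrix σ σ ℂ) (p : MvPolynomial σ ℂ) :
    linSubst M (linSubst N p) = linSubst (M * N) p := by
  suffices (linSubst M).comp (linSubst N) = linSubst (M * N) from DFunLike.congr_fun this p
  refine algHom_ext fun j => ?_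
  simp only [AlgHom.comp_apply, linSubst_X, linSubst_lin]
  rfl

variable [DecidableEq σ]

lemma linSubst_one (p : MvPolynomial σ ℂ) : linSubst 1 p = p := by
  suffices linSubst (1 : Matrix σ σ ℂ) = AlgHom.id ℂ _ from DFunLike.congr_fun this p
  refine algHom_ext fun j => ?_
  simp [linSubst, lin, Matrix.one_apply, apply_ite C, ite_mul]

lemma linSubst_inv_linSubst {M : Matrix σ σ ℂ} (hM : IsUnit M.det) (p : MvPolynomial σ ℂ) :
    linSubst M⁻¹ (linSubst M p) = p := by
  rw [linSubst_linSubst, Matrix.nonsing_inv_mul M hM, linSubst_one]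

end LinSubst

/-- With `ι = Fin (rk F)` this is membership of `a` in the Waring locus of `F`. -/
def InPowerSpan {σ : Type*} [Fintype σ] (ι : Type*) [Fintype ι] (d : ℕ) (F : MvPolynomial σ ℂ)
    (a : σ → ℂ) : Prop :=
  ∃ (c : ι → ℂ) (L : ι → σ → ℂ) (j₀ : ι), L j₀ = a ∧ F = ∑ j, c j • lin (L j) ^ d

section WaringInvariance

variable {σ : Type*} [Fintype σ] {d r : ℕ} {F : MvPolynomial σ ℂ}

lemma inWaringLocus_iff_inPowerSpan {a : σ → ℂ} :
    InWaringLocus d F a ↔ InPowerSpan (Fin (waringRank d F)) d F a :=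
  Iff.rfl

lemma HasWaringDecomp.linSubst (h : HasWaringDecomp d F r) (M : Matrix σ σ ℂ) :
    HasWaringDecomp d (linSubst M F) r := by
  obtain ⟨L, rfl⟩ := h
  exact ⟨fun j => M *ᵥ L j, by simp only [map_sum, map_pow, linSubst_lin]⟩

lemma InPowerSpan.linSubst {ι : Type*} [Fintype ι] {a : σ → ℂ} (h : InPowerSpan ι d F a)
    (M : Matrix σ σ ℂ) : InPowerSpan ι d (linSubst M F) (M *ᵥ a) := by
  obtain ⟨c, L, j₀, rfl, rfl⟩ := h
  exact ⟨c, fun j => M *ᵥ L j, j₀, rfl, linSubst_sum_smul_lin_pow M d c L⟩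

lemma InPowerSpan.smul {ι : Type*} [Fintype ι] [DecidableEq ι] {a : σ → ℂ}
    (h : InPowerSpan ι d F a) {t : ℂ} (ht : t ≠ 0) : InPowerSpan ι d F (t • a) := by
  obtain ⟨c, L, j₀, rfl, rfl⟩ := h
  refine ⟨Function.update c j₀ (c j₀ / t ^ d), Function.update L j₀ (t • L j₀), j₀, by simp,
    Finset.sum_congr rfl fun j _ => ?_⟩
  rcases eq_or_ne j j₀ with rfl | hj
  · simp only [Function.update_self, lin_smul, smul_pow, smul_smul]
    field_simp
  · simp only [Function.update_of_ne hj]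

variable [DecidableEq σ] {M : Matrix σ σ ℂ}

lemma hasWaringDecomp_linSubst_iff (hM : IsUnit M.det) :
    HasWaringDecomp d (linSubst M F) r ↔ HasWaringDecomp d F r :=
  ⟨fun h => by simpa only [linSubst_inv_linSubst hM] using h.linSubst M⁻¹,
    fun h => h.linSubst M⟩

lemma waringRank_linSubst (hM : IsUnit M.det) : waringRank d (linSubst M F) = waringRank d F := by
  simp only [waringRank, hasWaringDecomp_linSubst_iff hM]

lemma inPowerSpan_linSubst_iff {ι : Type*} [Fintype ι] (hM : IsUnit M.det) {a : σ → ℂ} :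
    InPowerSpan ι d (linSubst M F) (M *ᵥ a) ↔ InPowerSpan ι d F a :=
  ⟨fun h => by
    simpa only [linSubst_inv_linSubst hM, Matrix.mulVec_mulVec, Matrix.nonsing_inv_mul M hM,
      Matrix.one_mulVec] using h.linSubst M⁻¹,
    fun h => h.linSubst M⟩

lemma inWaringLocus_linSubst_iff (hM : IsUnit M.det) {a : σ → ℂ} :
    InWaringLocus d (linSubst M F) (M *ᵥ a) ↔ InWaringLocus d F a := by
  rw [inWaringLocus_iff_inPowerSpan, inWaringLocus_iff_inPowerSpan, waringRank_linSubst hM]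
  exact inPowerSpan_linSubst_iff hM

end WaringInvariance

def dotReflection {σ K : Type*} [Fintype σ] [Field K] (w v : σ → K) : σ → K :=
  v - (2 * (w ⬝ᵥ v) / (w ⬝ᵥ w)) • w

section Reflection

variable {σ K : Type*} [Fintype σ] [Field K]

lemma dotProduct_dotReflection (w u v : σ → K) :
    u ⬝ᵥ dotReflection w v = dotReflection w u ⬝ᵥ v := by
  simp only [dotReflection, dotProduct_sub, sub_dotProduct, dotProduct_smul, smul_dotProduct,
    smul_eq_mul, dotProduct_comm u w, dotProduct_comm w v]
  ring

lemma dotReflection_dotProduct_self {w : σ → K} (hw : w ⬝ᵥ w ≠ 0) (v : σ → K) :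
    dotReflection w v ⬝ᵥ dotReflection w v = v ⬝ᵥ v := by
  simp only [dotReflection, dotProduct_sub, sub_dotProduct, dotProduct_smul, smul_dotProduct,
    smul_eq_mul, dotProduct_comm v w]
  field_simp
  ring

lemma dotReflection_sub_self {p q : σ → K} (hpq : p ⬝ᵥ p = q ⬝ᵥ q)
    (hw : (q - p) ⬝ᵥ (q - p) ≠ 0) : dotReflection (q - p) p = q := by
  have hwp : (q - p) ⬝ᵥ (q - p) = -2 * ((q - p) ⬝ᵥ p) := by
    simp only [dotProduct_sub, sub_dotProduct, dotProduct_comm p q] at hw ⊢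
    linear_combination -hpq
  rw [hwp] at hw
  have hcoef : 2 * ((q - p) ⬝ᵥ p) / (-2 * ((q - p) ⬝ᵥ p)) = -1 := by
    rw [neg_mul, div_neg, div_self (by simpa using hw)]
  rw [dotReflection, hwp, hcoef, neg_one_smul, sub_neg_eq_add, add_sub_cancel]

end Reflection

lemma Matrix.eq_one_of_dotProduct_mulVec_self_eq {σ K : Type*} [Fintype σ] [DecidableEq σ]
    [Field K] [NeZero (2 : K)] {A : Matrix σ σ K} (hA : Aᵀ = A)
    (h : ∀ x, x ⬝ᵥ A *ᵥ x = x ⬝ᵥ x) : A = 1 := by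
  ext i k
  have hsymm : A k i = A i k := congr_fun₂ hA i k
  have hi := h (Pi.single i 1)
  simp only [Matrix.mulVec_single_one, single_dotProduct, Matrix.col_apply, one_mul,
    Pi.single_eq_same] at hi
  rcases eq_or_ne i k with rfl | hne
  · rw [hi, Matrix.one_apply_eq]
  have hk := h (Pi.single k 1)
  have hik := h (Pi.single i 1 + Pi.single k 1)
  simp only [Matrix.mulVec_single_one, single_dotProduct, Matrix.col_apply, one_mul,
    Pi.single_eq_same] at hk
  simp only [Matrix.mulVec_add, dotProduct_add, add_dotProduct, Matrix.mulVec_single_one,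
    single_dotProduct, dotProduct_single, Matrix.col_apply, Pi.add_apply, Pi.single_eq_same,
    Pi.single_eq_of_ne hne, Pi.single_eq_of_ne hne.symm, hi, hk, hsymm] at hik
  rw [Matrix.one_apply_ne hne]
  have : (2 : K) * A i k = 0 := by linear_combination hik
  exact (mul_eq_zero.mp this).resolve_left two_ne_zero

lemma dotProduct_transpose_mul_diagonal_mul_mulVec {ι σ K : Type*} [Fintype ι] [Fintype σ]
    [DecidableEq ι] [CommRing K] (M : Matrix ι σ K) (c : ι → K) (x : σ → K) :
    x ⬝ᵥ (Mᵀ * Matrix.diagonal c * M) *ᵥ x = ∑ j, c j * (M *ᵥ x) j ^ 2 := by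
  rw [← Matrix.mulVec_mulVec, ← Matrix.mulVec_mulVec, Matrix.dotProduct_mulVec,
    Matrix.vecMul_transpose, dotProduct]
  exact Finset.sum_congr rfl fun j _ => by rw [Matrix.mulVec_diagonal]; ring

lemma exists_mul_self_eq_and_ne {a : ℂ} (ha : a ≠ 0) (z : ℂ) : ∃ u, u * u = a ∧ u ≠ z := by
  obtain ⟨t, ht⟩ := IsAlgClosed.exists_eq_mul_self a
  have ht0 : t ≠ 0 := by rintro rfl; simp [ht] at ha
  by_cases htz : t = z
  · refine ⟨-t, by rw [neg_mul_neg, ht], ?_⟩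
    rw [← htz, Ne, neg_eq_iff_add_eq_zero, ← two_mul]
    simpa using ht0
  · exact ⟨t, ht.symm, htz⟩

section SumOfSquares

variable {σ : Type*} [Fintype σ] [DecidableEq σ]

lemma sum_X_sq_eq_sum_lin_dotReflection_sq {w : σ → ℂ} (hw : w ⬝ᵥ w ≠ 0) :
    (∑ i, X i ^ 2 : MvPolynomial σ ℂ) = ∑ j, lin (dotReflection w (Pi.single j 1)) ^ 2 := by
  refine MvPolynomial.funext fun x => ?_
  rw [eval_sum_X_sq, map_sum, ← dotReflection_dotProduct_self hw x, dotProduct]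
  refine Finset.sum_congr rfl fun j _ => ?_
  rw [map_pow, eval_lin, ← dotProduct_dotReflection, single_dotProduct, one_mul, sq]

lemma inPowerSpan_sum_X_sq {b : σ → ℂ} (hb : b ⬝ᵥ b ≠ 0) :
    InPowerSpan σ 2 (∑ i, X i ^ 2) b := by
  obtain ⟨i₀, -⟩ : ∃ i, b i ≠ 0 := Function.ne_iff.mp (by rintro rfl; simp at hb)
  obtain ⟨u, hu, hub⟩ := exists_mul_self_eq_and_ne hb (b i₀)
  have hu0 : u ≠ 0 := by rintro rfl; simp [← hu] at hb
  set e : σ → ℂ := Pi.single i₀ 1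
  set q : σ → ℂ := u⁻¹ • b
  have hee : e ⬝ᵥ e = 1 := by simp [e]
  have hq : e ⬝ᵥ e = q ⬝ᵥ q := by
    rw [hee, eq_comm]
    simp only [q, smul_dotProduct, dotProduct_smul, ← hu, smul_eq_mul]
    field_simp
  -- `u ≠ b i₀` makes `q - e` anisotropic, so the reflection in it sends `e` to `q`.
  have hw : (q - e) ⬝ᵥ (q - e) ≠ 0 := by
    have hqe : (q - e) ⬝ᵥ (q - e) = 2 * (1 - u⁻¹ * b i₀) := by
      simp only [dotProduct_sub, sub_dotProduct, ← hq, hee, e, single_dotProduct,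
        dotProduct_single, q, Pi.sub_apply, Pi.smul_apply, smul_eq_mul, Pi.single_eq_same]
      ring
    rw [hqe]
    refine mul_ne_zero two_ne_zero (sub_ne_zero.mpr ?_)
    rw [Ne, eq_comm, inv_mul_eq_one₀ hu0]
    exact hub
  have hq_mem : InPowerSpan σ 2 (∑ i, X i ^ 2) q :=
    ⟨1, fun j => dotReflection (q - e) (Pi.single j 1), i₀, dotReflection_sub_self hq hw,
      by simpa using sum_X_sq_eq_sum_lin_dotReflection_sq hw⟩
  simpa [q, smul_smul, hu0] using hq_mem.smul hu0

lemma mul_dotProduct_self_eq_one_of_sum_X_sq_eq {c : σ → ℂ} {L : σ → σ → ℂ}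
    (h : ∑ i, X i ^ 2 = ∑ j, c j • lin (L j) ^ 2) (j : σ) : c j * (L j ⬝ᵥ L j) = 1 := by
  set M : Matrix σ σ ℂ := Matrix.of L
  have hM : Mᵀ * Matrix.diagonal c * M = 1 := by
    refine Matrix.eq_one_of_dotProduct_mulVec_self_eq ?_ fun x => ?_
    · simp [Matrix.transpose_mul, Matrix.mul_assoc]
    · rw [dotProduct_transpose_mul_diagonal_mul_mulVec, ← eval_sum_X_sq, h,
        eval_sum_smul_lin_pow]
      rfl
  rw [Matrix.mul_assoc, mul_eq_one_comm] at hM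
  have hjj := congr_fun₂ hM j j
  rw [Matrix.mul_apply, Matrix.one_apply_eq] at hjj
  simp only [Matrix.diagonal_mul, Matrix.transpose_apply, M, Matrix.of_apply] at hjj
  simpa only [dotProduct, Finset.mul_sum, mul_assoc] using hjj

lemma inPowerSpan_sum_X_sq_iff {b : σ → ℂ} :
    InPowerSpan σ 2 (∑ i, X i ^ 2) b ↔ b ⬝ᵥ b ≠ 0 := by
  refine ⟨?_, inPowerSpan_sum_X_sq⟩
  rintro ⟨c, L, j, rfl, h⟩
  exact right_ne_zero_of_mul_eq_one (mul_dotProduct_self_eq_one_of_sum_X_sq_eq h j)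

end SumOfSquares

theorem forbidden_locus_quadric_change_of_variables_general (n : ℕ)
    (Q : MvPolynomial (Fin (n + 1)) ℂ)
    (hrk : waringRank 2 Q = n + 1)
    (B : Matrix (Fin (n + 1)) (Fin (n + 1)) ℂ) (hB : IsUnit B.det)
    (hchange : aeval (fun j => ∑ i, C (B i j) * X i) Q
      = ∑ i : Fin (n + 1), (X i : MvPolynomial (Fin (n + 1)) ℂ) ^ 2) :
    ∀ a : Fin (n + 1) → ℂ, a ≠ 0 →
      (¬ InWaringLocus 2 Q a ↔ dotProduct a ((B.transpose * B).mulVec a) = 0) := by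
  intro a _
  replace hchange : linSubst B Q = ∑ i, X i ^ 2 := hchange
  have hrank : waringRank 2 (∑ i, X i ^ 2 : MvPolynomial (Fin (n + 1)) ℂ) = n + 1 := by
    rw [← hchange, waringRank_linSubst hB, hrk]
  have hquad : a ⬝ᵥ (Bᵀ * B) *ᵥ a = (B *ᵥ a) ⬝ᵥ (B *ᵥ a) := by
    rw [← Matrix.mulVec_mulVec, Matrix.dotProduct_mulVec, Matrix.vecMul_transpose]
  rw [← inWaringLocus_linSubst_iff hB, hchange, inWaringLocus_iff_inPowerSpan, hrank,
    inPowerSpan_sum_X_sq_iff, hquad, not_not]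

/-- forbidden locus of a full-rank quadric after a change of variables:
if `(x₀,…,xₙ) = (y₀,…,yₙ)B` turns `Q` into `y₀² + ⋯ + yₙ²`, then a nonzero linear form
with coefficient vector `a` is forbidden for `Q` iff `a Bᵀ B aᵀ = 0`. -/
theorem forbidden_locus_quadric_change_of_variables (n : ℕ)
    (Q : MvPolynomial (Fin (n + 1)) ℂ) (hQ : Q.IsHomogeneous 2)
    (hrk : waringRank 2 Q = n + 1)
    (B : Matrix (Fin (n + 1)) (Fin (n + 1)) ℂ) (hB : IsUnit B.det)
    (hchange : aeval (fun j => ∑ i, C (B i j) * X i) Q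
      = ∑ i : Fin (n + 1), (X i : MvPolynomial (Fin (n + 1)) ℂ) ^ 2) :
    ∀ a : Fin (n + 1) → ℂ, a ≠ 0 →
      (¬ InWaringLocus 2 Q a ↔ dotProduct a ((B.transpose * B).mulVec a) = 0) :=
  forbidden_locus_quadric_change_of_variables_general n Q hrk B hB hchange

end
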